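/- arXiv:0806.3687 — 2 statements merged into one kernel-verified Lean document; each statement's English description precedes it below -/
import Mathlib

section
/- Let M be a compact metrizable topological space, let B̃ and B be Polish spaces, and let Λ : B̃ → B be an n-fold covering map for some positive integer n (that is, a covering map each of whose fibers has exactly n elements). Then every continuous map ξ : M → B admits a Borel measurable lift, i.e. there exists a map ξ̃ : M → B̃ which is measurable with respect to the Borel σ-algebras and satisfies Λ ∘ ξ̃ = ξ. -/
open Set MeasureTheory

/-! A covering map is a local homeomorphism, so the second-countable total space is covered by
countably many charts whose inverses are continuous on open subsets of the base. Choosing at each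
point of the base the first chart whose target contains it glues these inverses into a Borel
section of the covering map, and composing it with `ξ` gives the lift. -/

section MeasurableSection

variable {ι X Y : Type*} [Countable ι]
  [TopologicalSpace X] [MeasurableSpace X] [BorelSpace X]
  [TopologicalSpace Y] [MeasurableSpace Y] [OpensMeasurableSpace Y]

theorem exists_measurable_glue_of_continuousOn {U : ι → Set Y} (hU : ∀ i, MeasurableSet (U i))
    {g : ι → Y → X} (hg : ∀ i, ContinuousOn (g i) (U i)) (hcover : ⋃ i, U i = univ) :
    ∃ s : Y → X, Measurable s ∧ ∀ y, ∃ i, y ∈ U i ∧ s y = g i y := by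
  classical
  rcases isEmpty_or_nonempty Y with hY | ⟨⟨y₀⟩⟩
  · exact ⟨isEmptyElim, measurable_of_empty _, isEmptyElim⟩
  have hmem : ∀ y, ∃ i, y ∈ U i := fun y => mem_iUnion.1 (hcover ▸ mem_univ y)
  obtain ⟨i₀, -⟩ := hmem y₀
  have : Nonempty ι := ⟨i₀⟩
  obtain ⟨φ, hφ⟩ := exists_surjective_nat ι
  have hmem_nat : ∀ y, ∃ n, y ∈ U (φ n) := fun y =>
    let ⟨i, hi⟩ := hmem y
    let ⟨n, hn⟩ := hφ i
    ⟨n, hn ▸ hi⟩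
  -- extend each `g i` off `U i` by a constant so that it becomes globally measurable
  let g' : ℕ → Y → X := fun n => (U (φ n)).piecewise (g (φ n)) fun _ => g i₀ y₀
  have hg' : ∀ n, Measurable (g' n) := fun n =>
    (hg (φ n)).measurable_piecewise continuousOn_const (hU (φ n))
  have hs : Measurable fun y => g' (Nat.find (hmem_nat y)) y :=
    Measurable.find (p := fun n y => y ∈ U (φ n)) hg' (fun n => hU (φ n)) hmem_nat
  refine ⟨_, hs, fun y => ⟨φ (Nat.find (hmem_nat y)), Nat.find_spec (hmem_nat y), ?_⟩⟩
  exact piecewise_eq_of_mem _ _ _ (Nat.find_spec (hmem_nat y))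

theorem IsLocalHomeomorph.exists_measurable_rightInverse [SecondCountableTopology X]
    {f : X → Y} (hf : IsLocalHomeomorph f) (hsurj : Function.Surjective f) :
    ∃ s : Y → X, Measurable s ∧ Function.RightInverse s f := by
  choose e hxe hfe using hf
  obtain ⟨T, hTc, hT⟩ :=
    TopologicalSpace.isOpen_iUnion_countable (fun x => (e x).source) fun x => (e x).open_source
  have : Countable T := hTc.to_subtype
  have hcover : ⋃ x : T, (e x).target = univ := by
    refine eq_univ_of_forall fun y => ?_
    obtain ⟨x, rfl⟩ := hsurj y
    have hx : x ∈ ⋃ z ∈ T, (e z).source := hT ▸ mem_iUnion.2 ⟨x, hxe x⟩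
    obtain ⟨z, hzT, hxz⟩ := mem_iUnion₂.1 hx
    exact mem_iUnion.2 ⟨⟨z, hzT⟩, hfe z ▸ (e z).map_source hxz⟩
  obtain ⟨s, hs, hsg⟩ := exists_measurable_glue_of_continuousOn
    (fun x : T => (e x).open_target.measurableSet) (fun x => (e x).continuousOn_symm) hcover
  refine ⟨s, hs, fun y => ?_⟩
  obtain ⟨x, hy, hsy⟩ := hsg y
  rw [hsy, hfe x]
  exact (e x).right_inv hy

end MeasurableSection

theorem measurable_lift_of_covering_general
    {M B' B : Type*}
    [TopologicalSpace M]
    [TopologicalSpace B'] [PolishSpace B']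
    [TopologicalSpace B]
    [MeasurableSpace M] [BorelSpace M]
    [MeasurableSpace B'] [BorelSpace B']
    (n : ℕ) (hn : 0 < n)
    (Λ : B' → B) (hΛ : IsCoveringMap Λ)
    (hfib : ∀ b : B, Nat.card (Λ ⁻¹' {b}) = n)
    (ξ : M → B) (hξ : Continuous ξ) :
    ∃ ξ' : M → B', Measurable ξ' ∧ Λ ∘ ξ' = ξ := by
  borelize B
  have hsurj : Function.Surjective Λ := fun b => by
    obtain ⟨⟨x, hx⟩⟩ := (Nat.card_pos_iff.mp (hfib b ▸ hn)).1
    exact ⟨x, hx⟩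
  obtain ⟨s, hs, hΛs⟩ := hΛ.isLocalHomeomorph.exists_measurable_rightInverse hsurj
  exact ⟨s ∘ ξ, hs.comp hξ.measurable, funext fun m => hΛs (ξ m)⟩

/-- measurable lifts of continuous maps through an `n`-fold covering map
between Polish spaces, from a compact metrizable space. -/
theorem measurable_lift_of_covering
    {M B' B : Type*}
    [TopologicalSpace M] [CompactSpace M] [TopologicalSpace.MetrizableSpace M]
    [TopologicalSpace B'] [PolishSpace B']
    [TopologicalSpace B] [PolishSpace B]
    [MeasurableSpace M] [BorelSpace M]
    [MeasurableSpace B'] [BorelSpace B']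
    (n : ℕ) (hn : 0 < n)
    (Λ : B' → B) (hΛ : IsCoveringMap Λ)
    (hfib : ∀ b : B, Nat.card (Λ ⁻¹' {b}) = n)
    (ξ : M → B) (hξ : Continuous ξ) :
    ∃ ξ' : M → B', Measurable ξ' ∧ Λ ∘ ξ' = ξ :=
  measurable_lift_of_covering_general n hn Λ hΛ hfib ξ hξ
end

section
/- Let M be a compact metrizable topological space, let B̃ and B be Polish spaces, let π : B → M and π̃ : B̃ → M be continuous maps, and let Λ : B̃ → B be an n-fold covering map (for some positive integer n) satisfying π ∘ Λ = π̃. Then every continuous section s : M → B of π (that is, a continuous map with π ∘ s = id_M) admits a Borel measurable lift s̃ : M → B̃ with Λ ∘ s̃ = s; in particular π̃ ∘ s̃ = id_M, so s̃ is a Borel measurable section of π̃. -/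
/-!
Since `Λ` is a surjective local homeomorphism, every point of `M` has an open neighbourhood on
which `s` has a continuous lift through `Λ`. A Lindelöf (e.g. compact) space is covered by
countably many such neighbourhoods `W₀, W₁, …`; lifting each point by the lift attached to the
first `Wₙ` containing it gives a Borel measurable lift, because the index map is measurable.
-/

open Set Filter Topology

theorem exists_measurable_forall_of_local_continuousOn {X Y : Type*}
    [TopologicalSpace X] [LindelofSpace X] [MeasurableSpace X] [OpensMeasurableSpace X]
    [TopologicalSpace Y] [MeasurableSpace Y] [BorelSpace Y] {P : X → Y → Prop}
    (h : ∀ x, ∃ U ∈ 𝓝 x, ∃ g : X → Y, ContinuousOn g U ∧ ∀ y ∈ U, P y (g y)) :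
    ∃ f : X → Y, Measurable f ∧ ∀ x, P x (f x) := by
  rcases isEmpty_or_nonempty X with _ | ⟨⟨x₀⟩⟩
  · exact ⟨isEmptyElim, measurable_of_empty _, isEmptyElim⟩
  choose U hU g hg hP using h
  have : Nonempty Y := ⟨g x₀ x₀⟩
  obtain ⟨t, ht, htU⟩ := countable_cover_nhds_interior hU
  have ht₀ : t.Nonempty := by
    obtain ⟨x, hx, -⟩ := mem_iUnion₂.mp (htU.symm ▸ mem_univ x₀)
    exact ⟨x, hx⟩
  obtain ⟨c, rfl⟩ := ht.exists_eq_range ht₀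
  have hcov : ∀ x, ∃ n, x ∈ interior (U (c n)) := by
    simpa [eq_univ_iff_forall] using htU
  classical
  -- Extending the local lifts by a constant makes them globally measurable, as `Measurable.find`
  -- requires.
  let G n := (interior (U (c n))).piecewise (g (c n)) fun _ ↦ Classical.arbitrary Y
  have hG : ∀ n, Measurable (G n) := fun n ↦
    ((hg _).mono interior_subset).measurable_piecewise continuousOn_const
      isOpen_interior.measurableSet
  refine ⟨fun x ↦ G (Nat.find (hcov x)) x,
    Measurable.find (p := fun n x ↦ x ∈ interior (U (c n))) hG
      (fun _ ↦ isOpen_interior.measurableSet) hcov, fun x ↦ ?_⟩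
  have hx := Nat.find_spec (hcov x)
  simp only [G, piecewise_eq_of_mem _ _ _ hx]
  exact hP _ _ (interior_subset hx)

namespace IsLocalHomeomorph

variable {X E Y : Type*} [TopologicalSpace X] [TopologicalSpace E] [TopologicalSpace Y]
  {Λ : E → Y} {s : X → Y}

theorem exists_continuousOn_lift (hΛ : IsLocalHomeomorph Λ) (hsurj : Function.Surjective Λ)
    (hs : Continuous s) (x : X) :
    ∃ U ∈ 𝓝 x, ∃ g : X → E, ContinuousOn g U ∧ ∀ y ∈ U, Λ (g y) = s y := by
  obtain ⟨b, hb⟩ := hsurj (s x)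
  obtain ⟨e, hbe, rfl⟩ := hΛ b
  have hx : s x ∈ e.target := hb ▸ e.map_source hbe
  refine ⟨s ⁻¹' e.target, hs.continuousAt.preimage_mem_nhds (e.open_target.mem_nhds hx),
    e.symm ∘ s, e.continuousOn_symm.comp hs.continuousOn fun _ ↦ id, fun y hy ↦ ?_⟩
  exact e.right_inv hy

theorem exists_measurable_lift [MeasurableSpace X] [OpensMeasurableSpace X] [LindelofSpace X]
    [MeasurableSpace E] [BorelSpace E] (hΛ : IsLocalHomeomorph Λ)
    (hsurj : Function.Surjective Λ) (hs : Continuous s) :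
    ∃ f : X → E, Measurable f ∧ Λ ∘ f = s := by
  obtain ⟨f, hf, hΛf⟩ :=
    exists_measurable_forall_of_local_continuousOn (P := fun x e ↦ Λ e = s x)
      (hΛ.exists_continuousOn_lift hsurj hs)
  exact ⟨f, hf, funext hΛf⟩

end IsLocalHomeomorph

theorem measurable_section_lift_of_covering_general
    {M B' B : Type*}
    [TopologicalSpace M] [CompactSpace M]
    [TopologicalSpace B']
    [TopologicalSpace B]
    [MeasurableSpace M] [BorelSpace M]
    [MeasurableSpace B'] [BorelSpace B']
    (n : ℕ) (hn : 0 < n)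
    (π : B → M)
    (π' : B' → M)
    (Λ : B' → B) (hΛ : IsCoveringMap Λ)
    (hfib : ∀ b : B, Nat.card (Λ ⁻¹' {b}) = n)
    (hcomm : π ∘ Λ = π')
    (s : M → B) (hs : Continuous s) (hsec : π ∘ s = id) :
    ∃ s' : M → B', Measurable s' ∧ Λ ∘ s' = s ∧ π' ∘ s' = id := by
  have hsurj : Function.Surjective Λ := fun b ↦ by
    obtain ⟨⟨⟨a, ha⟩⟩, -⟩ := Nat.card_pos_iff.mp (hfib b ▸ hn)
    exact ⟨a, ha⟩
  obtain ⟨s', hs'm, hs'⟩ := hΛ.isLocalHomeomorph.exists_measurable_lift hsurj hs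
  refine ⟨s', hs'm, hs', ?_⟩
  rw [← hcomm, Function.comp_assoc, hs', hsec]

/-- a continuous section of a bundle admits a Borel measurable lift
through an `n`-fold covering bundle map. -/
theorem measurable_section_lift_of_covering
    {M B' B : Type*}
    [TopologicalSpace M] [CompactSpace M] [TopologicalSpace.MetrizableSpace M]
    [TopologicalSpace B'] [PolishSpace B']
    [TopologicalSpace B] [PolishSpace B]
    [MeasurableSpace M] [BorelSpace M]
    [MeasurableSpace B'] [BorelSpace B']
    (n : ℕ) (hn : 0 < n)
    (π : B → M) (hπ : Continuous π)
    (π' : B' → M) (hπ' : Continuous π')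
    (Λ : B' → B) (hΛ : IsCoveringMap Λ)
    (hfib : ∀ b : B, Nat.card (Λ ⁻¹' {b}) = n)
    (hcomm : π ∘ Λ = π')
    (s : M → B) (hs : Continuous s) (hsec : π ∘ s = id) :
    ∃ s' : M → B', Measurable s' ∧ Λ ∘ s' = s ∧ π' ∘ s' = id :=
  measurable_section_lift_of_covering_general n hn π π' Λ hΛ hfib hcomm s hs hsec
end
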